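/- arXiv:0806.3549 — 2 statements merged into one kernel-verified Lean document; each statement's English description precedes it below -/
import Mathlib

section
/- For all natural numbers n and real numbers ξ, ν, η, the triple sum over m from 0 to n, k from 0 to n-m, and j from 0 to m of C(n-m,k)·C(m,j)·(ξ^k ν^j / (k! j!))·η^(n-k-j) equals the single sum over r from 0 to n of C(n+1,r+1)·((ξ+ν)^r / r!)·η^(n-r). -/
/-!
Exchanging the order of summation, the coefficient of `ξ^k ν^j η^(n-k-j) / (k! j!)` becomes
`∑ m, C(m, j) C(n - m, k) = C(n + 1, j + k + 1)` (upper Vandermonde). Grouping the remaining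
double sum along the diagonals `k + j = r`, each diagonal sums to `(ξ + ν)^r / r!` by the
binomial theorem.
-/

open Finset
open scoped Nat

theorem Nat.sum_range_choose_mul_choose_sub (n i j : ℕ) :
    ∑ m ∈ range (n + 1), m.choose i * (n - m).choose j = (n + 1).choose (i + j + 1) := by
  induction n generalizing j with
  | zero => cases i <;> cases j <;> simp [choose_succ_succ, ← add_assoc]
  | succ n ih =>
    cases j with
    | zero =>
      have hockey := ih 0
      simp only [choose_zero_right, mul_one, add_zero] at hockey ⊢
      rw [sum_range_succ, hockey, choose_succ_succ' (n + 1) i, add_comm]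
    | succ j =>
      have pascal : ∀ m ∈ range (n + 1), m.choose i * (n + 1 - m).choose (j + 1) =
          m.choose i * (n - m).choose j + m.choose i * (n - m).choose (j + 1) := by
        intro m hm
        rw [Nat.sub_add_comm (mem_range_succ_iff.1 hm), choose_succ_succ, mul_add]
      rw [sum_range_succ, Nat.sub_self, choose_zero_succ, mul_zero, add_zero, sum_congr rfl pascal,
        sum_add_distrib, ih, ih, choose_succ_succ' (n + 1)]
      rfl

theorem sum_range_triple_choose_mul_choose {R : Type*} [CommSemiring R] (n : ℕ) (f : ℕ → ℕ → R) :
    ∑ m ∈ range (n + 1), ∑ k ∈ range (n - m + 1), ∑ j ∈ range (m + 1),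
        ((n - m).choose k : R) * (m.choose j : R) * f k j
      = ∑ r ∈ range (n + 1), ((n + 1).choose (r + 1) : R) * ∑ k ∈ range (r + 1), f k (r - k) := by
  have to_square : ∀ m ∈ range (n + 1),
      ∑ k ∈ range (n - m + 1), ∑ j ∈ range (m + 1), ((n - m).choose k : R) * m.choose j * f k j
        = ∑ k ∈ range (n + 1), ∑ j ∈ range (n + 1), ((n - m).choose k : R) * m.choose j * f k j := by
    intro m hm
    have hm := mem_range_succ_iff.1 hm
    refine (sum_subset (range_subset_range.2 (by omega)) fun k _ hk => ?_).trans
      (sum_congr rfl fun k _ => sum_subset (range_subset_range.2 (by omega)) fun j _ hj => ?_)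
    · simp [Nat.choose_eq_zero_of_lt (show n - m < k by simpa using hk)]
    · simp [Nat.choose_eq_zero_of_lt (show m < j by simpa using hj)]
  have to_triangle : ∀ k ∈ range (n + 1),
      ∑ j ∈ range (n + 1 - k), ((n + 1).choose (j + k + 1) : R) * f k j
        = ∑ j ∈ range (n + 1), ((n + 1).choose (j + k + 1) : R) * f k j := by
    refine fun k _ => sum_subset (range_subset_range.2 (by omega)) fun j _ hj => ?_
    simp [Nat.choose_eq_zero_of_lt (show n + 1 < j + k + 1 by simp only [mem_range] at hj; omega)]
  calc _ = ∑ k ∈ range (n + 1), ∑ j ∈ range (n + 1), ∑ m ∈ range (n + 1),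
          ((m.choose j * (n - m).choose k : ℕ) : R) * f k j := by
        rw [sum_congr rfl to_square, sum_comm]
        refine sum_congr rfl fun k _ => ?_
        rw [sum_comm]
        refine sum_congr rfl fun j _ => sum_congr rfl fun m _ => ?_
        push_cast
        ring
    _ = ∑ k ∈ range (n + 1), ∑ j ∈ range (n + 1), ((n + 1).choose (j + k + 1) : R) * f k j := by
        simp only [← sum_mul, ← Nat.cast_sum, Nat.sum_range_choose_mul_choose_sub]
    _ = ∑ r ∈ range (n + 1), ∑ k ∈ range (r + 1),
          ((n + 1).choose (r - k + k + 1) : R) * f k (r - k) := by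
        rw [← sum_congr rfl to_triangle, ← sum_range_diag_flip]
    _ = _ := by
        refine sum_congr rfl fun r _ => ?_
        rw [mul_sum]
        refine sum_congr rfl fun k hk => ?_
        rw [Nat.sub_add_cancel (mem_range_succ_iff.1 hk)]

theorem add_pow_div_factorial {K : Type*} [Field K] [CharZero K] (x y : K) (r : ℕ) :
    (x + y) ^ r / r ! = ∑ k ∈ range (r + 1), x ^ k * y ^ (r - k) / (k ! * (r - k)!) := by
  rw [add_pow, sum_div]
  refine sum_congr rfl fun k hk => ?_
  have : (r ! : K) ≠ 0 := mod_cast r.factorial_ne_zero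
  rw [Nat.cast_choose K (mem_range_succ_iff.1 hk)]
  field_simp

/-- The triple-sum combinatorial identity (Lemma 3.4 of the paper):
∑_{m=0}^{n} ∑_{k=0}^{n-m} ∑_{j=0}^{m} C(n-m,k)·C(m,j)·(ξ^k ν^j/(k!j!))·η^{n-k-j}
  = ∑_{r=0}^{n} C(n+1,r+1)·((ξ+ν)^r/r!)·η^{n-r}. -/
theorem triple_sum_binomial_identity (n : ℕ) (ξ ν η : ℝ) :
    ∑ m ∈ Finset.range (n + 1), ∑ k ∈ Finset.range (n - m + 1), ∑ j ∈ Finset.range (m + 1),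
        (Nat.choose (n - m) k : ℝ) * (Nat.choose m j : ℝ) *
          (ξ ^ k * ν ^ j / ((Nat.factorial k : ℝ) * (Nat.factorial j : ℝ))) * η ^ (n - k - j)
      = ∑ r ∈ Finset.range (n + 1),
          (Nat.choose (n + 1) (r + 1) : ℝ) * ((ξ + ν) ^ r / (Nat.factorial r : ℝ)) * η ^ (n - r) := by
  calc _ = ∑ m ∈ range (n + 1), ∑ k ∈ range (n - m + 1), ∑ j ∈ range (m + 1),
          ((n - m).choose k : ℝ) * m.choose j * (ξ ^ k * ν ^ j / (k ! * j !) * η ^ (n - k - j)) := by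
        simp only [mul_assoc]
    _ = ∑ r ∈ range (n + 1), ((n + 1).choose (r + 1) : ℝ) * ∑ k ∈ range (r + 1),
          ξ ^ k * ν ^ (r - k) / (k ! * (r - k)!) * η ^ (n - k - (r - k)) :=
        sum_range_triple_choose_mul_choose n _
    _ = _ := by
        refine sum_congr rfl fun r _ => ?_
        rw [add_pow_div_factorial, mul_assoc, sum_mul]
        refine congrArg _ (sum_congr rfl fun k hk => ?_)
        rw [show n - k - (r - k) = n - r by simp only [mem_range] at hk; omega]
end

section
/- Suppose there exist η > 0 and h > 0 such that for all x,y ∈ X and s < t ≤ s+h, ∫_s^t ∫_X p(s,x,u,z)·p(u,z,t,y)·q(u,z) dm(z) du ≤ η·p(s,x,t,y). Then with β = η/h, for ALL s < t and x,y ∈ X: ∫_s^t ∫_X p(s,x,u,z)·p(u,z,t,y)·q(u,z) dm(z) du ≤ (η + β(t-s))·p(s,x,t,y). -/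
/-!
Call `C` a relative bound on `(s, t)` if
`∫_s^t ∫ p(s,x,u,z) p(u,z,t,y) q(u,z) dz du ≤ C p(s,x,t,y)` for all `x, y`. Splitting the time
integral at an intermediate `r` and inserting Chapman–Kolmogorov at time `r` in the factor that
crosses `r` shows that relative bounds add up under concatenation of windows. Cutting `(s, t)`
into `⌊(t - s)/h⌋ + 1` windows of length at most `h` therefore gives the constant
`(⌊(t - s)/h⌋ + 1) η ≤ η + (η/h)(t - s)`. The Fubini–Tonelli steps need `μ` to be σ-finite, which
follows from Chapman–Kolmogorov: `z ↦ p(0,x,1,z) p(1,z,2,y)` is a strictly positive function with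
finite integral `p(0,x,2,y)`.
-/

open MeasureTheory Set
open scoped ENNReal

theorem sigmaFinite_of_lintegral_ne_top_of_ne_zero {X : Type*} [MeasurableSpace X]
    {μ : Measure X} {f : X → ℝ≥0∞} (hf : Measurable f) (hf_ne_zero : ∀ x, f x ≠ 0)
    (hf_int : ∫⁻ x, f x ∂μ ≠ ∞) : SigmaFinite μ := by
  have : IsFiniteMeasure (μ.withDensity f) := isFiniteMeasure_withDensity hf_int
  have hμ := withDensity_inv_same hf (ae_of_all μ hf_ne_zero)
    ((ae_lt_top hf hf_int).mono fun _ hx => hx.ne)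
  rw [← hμ]
  exact SigmaFinite.withDensity_of_ne_top' fun x => ENNReal.inv_ne_top.mpr (hf_ne_zero x)

theorem setLIntegral_Ioo_eq_add (f : ℝ → ℝ≥0∞) {s r t : ℝ} (hsr : s ≤ r) (hrt : r < t) :
    ∫⁻ u in Ioo s t, f u = (∫⁻ u in Ioo s r, f u) + ∫⁻ u in Ioo r t, f u := by
  rw [← Ioc_union_Ioo_eq_Ioo hsr hrt, lintegral_union measurableSet_Ioo
    (disjoint_left.mpr fun _ hu hu' => hu'.1.not_ge hu.2), setLIntegral_congr Ioo_ae_eq_Ioc.symm]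

theorem lintegral_lintegral_lintegral_swap {α β γ : Type*} [MeasurableSpace α]
    [MeasurableSpace β] [MeasurableSpace γ] {μa : Measure α} {μb : Measure β} {μc : Measure γ}
    [SFinite μa] [SFinite μb] [SFinite μc] {f : α → β → γ → ℝ≥0∞}
    (hf : Measurable fun a : α × β × γ => f a.1 a.2.1 a.2.2) :
    ∫⁻ a, ∫⁻ b, ∫⁻ c, f a b c ∂μc ∂μb ∂μa = ∫⁻ c, ∫⁻ a, ∫⁻ b, f a b c ∂μb ∂μa ∂μc := by
  calc ∫⁻ a, ∫⁻ b, ∫⁻ c, f a b c ∂μc ∂μb ∂μa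
      = ∫⁻ a, ∫⁻ c, ∫⁻ b, f a b c ∂μb ∂μc ∂μa :=
        lintegral_congr fun a => lintegral_lintegral_swap (by fun_prop)
    _ = ∫⁻ c, ∫⁻ a, ∫⁻ b, f a b c ∂μb ∂μa ∂μc :=
        lintegral_lintegral_swap (Measurable.aemeasurable
          (Measurable.lintegral_prod_right' (f := fun x : (α × γ) × β => f x.1.1 x.2 x.1.2)
            (by fun_prop)))

theorem sigmaFinite_of_chapmanKolmogorov {X : Type*} [MeasurableSpace X] {μ : Measure X}
    {p : ℝ → X → ℝ → X → ℝ≥0∞}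
    (hmp : Measurable fun a : ℝ × X × ℝ × X => p a.1 a.2.1 a.2.2.1 a.2.2.2)
    (hpos : ∀ s t : ℝ, ∀ x y : X, s < t → 0 < p s x t y ∧ p s x t y < ⊤)
    (hCK : ∀ s u t : ℝ, ∀ x y : X, s < u → u < t → ∫⁻ z, p s x u z * p u z t y ∂μ = p s x t y)
    (x y : X) : SigmaFinite μ :=
  sigmaFinite_of_lintegral_ne_top_of_ne_zero (f := fun z => p 0 x 1 z * p 1 z 2 y) (by fun_prop)
    (fun z => mul_ne_zero (hpos 0 1 x z one_pos).1.ne' (hpos 1 2 z y one_lt_two).1.ne')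
    ((hCK 0 1 2 x y one_pos one_lt_two).trans_lt (hpos 0 2 x y two_pos).2).ne

section Perturbation

variable {X : Type*} [MeasurableSpace X] (μ : Measure X)
  (p : ℝ → X → ℝ → X → ℝ≥0∞) (q : ℝ → X → ℝ≥0∞)

noncomputable def perturbationIntegral (S : Set ℝ) (s : ℝ) (x : X) (t : ℝ) (y : X) : ℝ≥0∞ :=
  ∫⁻ u in S, ∫⁻ z, p s x u z * p u z t y * q u z ∂μ

/-- The paper's best constant `I(s, t)` is the least `C` with `IsRelativeBound μ p q C s t`;
`IsRelativeBound.add` is its subadditivity. -/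
def IsRelativeBound (C : ℝ≥0∞) (s t : ℝ) : Prop :=
  ∀ x y, perturbationIntegral μ p q (Ioo s t) s x t y ≤ C * p s x t y

variable {μ p q}

theorem IsRelativeBound.mono {A B : ℝ≥0∞} {s t : ℝ} (hA : IsRelativeBound μ p q A s t)
    (hAB : A ≤ B) : IsRelativeBound μ p q B s t :=
  fun x y => (hA x y).trans (mul_le_mul_left hAB _)

variable [SFinite μ]
  (hmp : Measurable fun a : ℝ × X × ℝ × X => p a.1 a.2.1 a.2.2.1 a.2.2.2)
  (hmq : Measurable fun a : ℝ × X => q a.1 a.2)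
  (hCK : ∀ s u t : ℝ, ∀ x y : X, s < u → u < t → ∫⁻ z, p s x u z * p u z t y ∂μ = p s x t y)
include hmp hmq hCK

theorem perturbationIntegral_eq_lintegral_mul_right {S : Set ℝ} {r t : ℝ} (hS : MeasurableSet S)
    (hSr : S ⊆ Iio r) (hrt : r < t) (s : ℝ) (x y : X) :
    perturbationIntegral μ p q S s x t y
      = ∫⁻ w, perturbationIntegral μ p q S s x r w * p r w t y ∂μ := by
  calc perturbationIntegral μ p q S s x t y
      = ∫⁻ u in S, ∫⁻ z, ∫⁻ w, p s x u z * p u z r w * q u z * p r w t y ∂μ ∂μ := by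
        refine setLIntegral_congr_fun hS fun u hu => lintegral_congr fun z => ?_
        rw [← hCK u r t z y (hSr hu) hrt, ← lintegral_const_mul _ (by fun_prop),
          ← lintegral_mul_const _ (by fun_prop)]
        exact lintegral_congr fun w => by ring
    _ = ∫⁻ w, (∫⁻ u in S, ∫⁻ z, p s x u z * p u z r w * q u z * p r w t y ∂μ) ∂μ :=
        lintegral_lintegral_lintegral_swap (by fun_prop)
    _ = ∫⁻ w, perturbationIntegral μ p q S s x r w * p r w t y ∂μ := by
        refine lintegral_congr fun w => ?_
        rw [perturbationIntegral, ← lintegral_mul_const _ ?_]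
        · refine lintegral_congr fun u => ?_
          rw [lintegral_mul_const _ (by fun_prop)]
        · fun_prop

theorem perturbationIntegral_eq_lintegral_mul_left {S : Set ℝ} {s r : ℝ} (hS : MeasurableSet S)
    (hSr : S ⊆ Ioi r) (hsr : s < r) (t : ℝ) (x y : X) :
    perturbationIntegral μ p q S s x t y
      = ∫⁻ w, p s x r w * perturbationIntegral μ p q S r w t y ∂μ := by
  calc perturbationIntegral μ p q S s x t y
      = ∫⁻ u in S, ∫⁻ z, ∫⁻ w, p s x r w * (p r w u z * p u z t y * q u z) ∂μ ∂μ := by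
        refine setLIntegral_congr_fun hS fun u hu => lintegral_congr fun z => ?_
        rw [← hCK s r u x z hsr (hSr hu), ← lintegral_mul_const _ (by fun_prop),
          ← lintegral_mul_const _ (by fun_prop)]
        exact lintegral_congr fun w => by ring
    _ = ∫⁻ w, (∫⁻ u in S, ∫⁻ z, p s x r w * (p r w u z * p u z t y * q u z) ∂μ) ∂μ :=
        lintegral_lintegral_lintegral_swap (by fun_prop)
    _ = ∫⁻ w, p s x r w * perturbationIntegral μ p q S r w t y ∂μ := by
        refine lintegral_congr fun w => ?_
        rw [perturbationIntegral, ← lintegral_const_mul _ ?_]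
        · exact lintegral_congr fun u => lintegral_const_mul _ (by fun_prop)
        · fun_prop

theorem perturbationIntegral_le_of_isRelativeBound_left {A : ℝ≥0∞} {s r t : ℝ}
    (hA : IsRelativeBound μ p q A s r) (hsr : s < r) (hrt : r < t) (x y : X) :
    perturbationIntegral μ p q (Ioo s r) s x t y ≤ A * p s x t y := by
  calc perturbationIntegral μ p q (Ioo s r) s x t y
      = ∫⁻ w, perturbationIntegral μ p q (Ioo s r) s x r w * p r w t y ∂μ :=
        perturbationIntegral_eq_lintegral_mul_right hmp hmq hCK measurableSet_Ioo
          (fun _ hu => hu.2) hrt s x y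
    _ ≤ ∫⁻ w, A * (p s x r w * p r w t y) ∂μ :=
        lintegral_mono fun w => (mul_le_mul_left (hA x w) _).trans_eq (mul_assoc _ _ _)
    _ = A * p s x t y := by rw [lintegral_const_mul _ (by fun_prop), hCK s r t x y hsr hrt]

theorem perturbationIntegral_le_of_isRelativeBound_right {B : ℝ≥0∞} {s r t : ℝ}
    (hB : IsRelativeBound μ p q B r t) (hsr : s < r) (hrt : r < t) (x y : X) :
    perturbationIntegral μ p q (Ioo r t) s x t y ≤ B * p s x t y := by
  calc perturbationIntegral μ p q (Ioo r t) s x t y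
      = ∫⁻ w, p s x r w * perturbationIntegral μ p q (Ioo r t) r w t y ∂μ :=
        perturbationIntegral_eq_lintegral_mul_left hmp hmq hCK measurableSet_Ioo
          (fun _ hu => hu.1) hsr t x y
    _ ≤ ∫⁻ w, B * (p s x r w * p r w t y) ∂μ :=
        lintegral_mono fun w => (mul_le_mul_right (hB w y) _).trans_eq (by ring)
    _ = B * p s x t y := by rw [lintegral_const_mul _ (by fun_prop), hCK s r t x y hsr hrt]

theorem IsRelativeBound.add {A B : ℝ≥0∞} {s r t : ℝ} (hA : IsRelativeBound μ p q A s r)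
    (hB : IsRelativeBound μ p q B r t) (hsr : s < r) (hrt : r < t) :
    IsRelativeBound μ p q (A + B) s t := fun x y => by
  rw [perturbationIntegral, setLIntegral_Ioo_eq_add _ hsr.le hrt, add_mul]
  exact add_le_add (perturbationIntegral_le_of_isRelativeBound_left hmp hmq hCK hA hsr hrt x y)
    (perturbationIntegral_le_of_isRelativeBound_right hmp hmq hCK hB hsr hrt x y)

theorem isRelativeBound_of_le_add_mul {C : ℝ≥0∞} {h : ℝ} (hh : 0 < h)
    (hsmall : ∀ s t, s < t → t ≤ s + h → IsRelativeBound μ p q C s t) (n : ℕ) {s t : ℝ}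
    (hst : s < t) (hts : t ≤ s + (n + 1) * h) : IsRelativeBound μ p q ((n + 1) * C) s t := by
  induction n generalizing t with
  | zero => simpa using hsmall s t hst (by simpa using hts)
  | succ n ih =>
    by_cases hth : t ≤ s + h
    · exact (hsmall s t hst hth).mono (le_mul_of_one_le_left zero_le le_add_self)
    · push Not at hth
      push_cast at hts ⊢
      have hsplit := (ih (t := t - h) (by linarith) (by linarith)).add hmp hmq hCK
        (hsmall (t - h) t (by linarith) (by linarith)) (by linarith) (by linarith)
      rwa [← add_one_mul] at hsplit

end Perturbation

theorem relative_bound_all_times_general {X : Type*} [MeasurableSpace X] (μ : Measure X)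
    (p : ℝ → X → ℝ → X → ℝ≥0∞) (q : ℝ → X → ℝ≥0∞)
    (hmp : Measurable fun a : ℝ × X × ℝ × X => p a.1 a.2.1 a.2.2.1 a.2.2.2)
    (hmq : Measurable fun a : ℝ × X => q a.1 a.2)
    (hpos : ∀ s t : ℝ, ∀ x y : X, s < t → 0 < p s x t y ∧ p s x t y < ⊤)
    (hCK : ∀ s u t : ℝ, ∀ x y : X, s < u → u < t →
      ∫⁻ z, p s x u z * p u z t y ∂μ = p s x t y)
    (η h : ℝ) (hη : 0 < η) (hh : 0 < h)
    (hsmall : ∀ s t : ℝ, ∀ x y : X, s < t → t ≤ s + h →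
      (∫⁻ u in Set.Ioo s t, ∫⁻ z, p s x u z * p u z t y * q u z ∂μ)
        ≤ ENNReal.ofReal η * p s x t y) :
    ∀ s t : ℝ, ∀ x y : X, s < t →
      (∫⁻ u in Set.Ioo s t, ∫⁻ z, p s x u z * p u z t y * q u z ∂μ)
        ≤ ENNReal.ofReal (η + (η / h) * (t - s)) * p s x t y := by
  intro s t x y hst
  have : SigmaFinite μ := sigmaFinite_of_chapmanKolmogorov hmp hpos hCK x y
  set n := ⌊(t - s) / h⌋₊
  have hn : n * h ≤ t - s := (le_div_iff₀ hh).mp (Nat.floor_le (by positivity))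
  have hts : t ≤ s + (n + 1) * h := by
    have := (div_lt_iff₀ hh).mp (Nat.lt_floor_add_one ((t - s) / h))
    linarith
  calc (∫⁻ u in Ioo s t, ∫⁻ z, p s x u z * p u z t y * q u z ∂μ)
      ≤ (n + 1) * ENNReal.ofReal η * p s x t y :=
        isRelativeBound_of_le_add_mul hmp hmq hCK hh
          (fun s t hst hth x y => hsmall s t x y hst hth) n hst hts x y
    _ ≤ ENNReal.ofReal (η + (η / h) * (t - s)) * p s x t y := by
        rw [← ENNReal.ofReal_natCast, ← ENNReal.ofReal_one, ← ENNReal.ofReal_add (by positivity)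
          zero_le_one, ← ENNReal.ofReal_mul (by positivity)]
        gcongr
        have : n * η ≤ η / h * (t - s) := by
          rw [div_mul_eq_mul_div, le_div_iff₀ hh]
          linarith [mul_le_mul_of_nonneg_left hn hη.le]
        linarith

/-- Lemma 3.2: if the relative bound with constant η holds on time windows of length h,
then with β = η/h the bound η + β(t-s) holds for all s < t. -/
theorem relative_bound_all_times {X : Type*} [MeasurableSpace X] (μ : Measure X)
    (p : ℝ → X → ℝ → X → ℝ≥0∞) (q : ℝ → X → ℝ≥0∞)
    (hmp : Measurable fun a : ℝ × X × ℝ × X => p a.1 a.2.1 a.2.2.1 a.2.2.2)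
    (hmq : Measurable fun a : ℝ × X => q a.1 a.2)
    (hzero : ∀ s t : ℝ, ∀ x y : X, t ≤ s → p s x t y = 0)
    (hpos : ∀ s t : ℝ, ∀ x y : X, s < t → 0 < p s x t y ∧ p s x t y < ⊤)
    (hCK : ∀ s u t : ℝ, ∀ x y : X, s < u → u < t →
      ∫⁻ z, p s x u z * p u z t y ∂μ = p s x t y)
    (η h : ℝ) (hη : 0 < η) (hh : 0 < h)
    (hsmall : ∀ s t : ℝ, ∀ x y : X, s < t → t ≤ s + h →
      (∫⁻ u in Set.Ioo s t, ∫⁻ z, p s x u z * p u z t y * q u z ∂μ)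
        ≤ ENNReal.ofReal η * p s x t y) :
    ∀ s t : ℝ, ∀ x y : X, s < t →
      (∫⁻ u in Set.Ioo s t, ∫⁻ z, p s x u z * p u z t y * q u z ∂μ)
        ≤ ENNReal.ofReal (η + (η / h) * (t - s)) * p s x t y :=
  relative_bound_all_times_general μ p q hmp hmq hpos hCK η h hη hh hsmall
end
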